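/- For a fixed source s, if d^{h+1}(s,v) = d^h(s,v) for all negative vertices v ∈ N, then d(s,v) = d^{h+1}(s,v) for all vertices v (assuming d(s,v) > −∞). -/
import Mathlib


open Classical

variable {V : Type*}

/-- `IsWalk E s t p`: `p` is the list of successive vertices (after `s`) of a walk
from `s` to `t` in the directed graph with edge relation `E`. -/
def IsWalk (E : V → V → Prop) : V → V → List V → Prop
  | s, t, [] => s = t
  | s, t, v :: p => E s v ∧ IsWalk E v t p

/-- Length of a walk: sum of edge lengths. -/
noncomputable def walkLen (ℓ : V → V → ℝ) : V → List V → ℝ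
  | _, [] => 0
  | s, v :: p => ℓ s v + walkLen ℓ v p

/-- Number of hops of a walk: number of designated (negative) edges, with multiplicity. -/
noncomputable def hopCount (neg : V → V → Prop) : V → List V → ℕ
  | _, [] => 0
  | s, v :: p => (if neg s v then 1 else 0) + hopCount neg v p

/-- `h`-hop distance: infimum length over walks from `s` to `t` with at most `h` hops. -/
noncomputable def hopDist (E : V → V → Prop) (ℓ : V → V → ℝ) (neg : V → V → Prop)
    (h : ℕ) (s t : V) : EReal :=
  ⨅ p ∈ {p : List V | IsWalk E s t p ∧ hopCount neg s p ≤ h}, (walkLen ℓ s p : EReal)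

/-- Distance: infimum length over all walks from `s` to `t`. -/
noncomputable def walkDist (E : V → V → Prop) (ℓ : V → V → ℝ) (s t : V) : EReal :=
  ⨅ p ∈ {p : List V | IsWalk E s t p}, (walkLen ℓ s p : EReal)

lemma isWalk_append {E : V → V → Prop} :
    ∀ {q : List V} {s u t : V} (r : List V),
      IsWalk E s u q → IsWalk E u t r → IsWalk E s t (q ++ r)
  | [], s, u, t, r, hq, hr => by
      simp only [IsWalk] at hq; subst hq; simpa using hr
  | a :: q, s, u, t, r, hq, hr => ⟨hq.1, isWalk_append r hq.2 hr⟩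

lemma walkLen_append (ℓ : V → V → ℝ) {E : V → V → Prop} {q : List V} :
    ∀ {s u : V}, IsWalk E s u q →
      ∀ r : List V, walkLen ℓ s (q ++ r) = walkLen ℓ s q + walkLen ℓ u r := by
  induction q with
  | nil =>
    intro s u hq r
    simp only [IsWalk] at hq; subst hq; simp [walkLen]
  | cons a q ih =>
    intro s u hq r
    rw [List.cons_append]
    show ℓ s a + walkLen ℓ a (q ++ r) = (ℓ s a + walkLen ℓ a q) + walkLen ℓ u r
    rw [ih hq.2 r]; ring

lemma hopCount_append (neg : V → V → Prop) {E : V → V → Prop} {q : List V} :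
    ∀ {s u : V}, IsWalk E s u q →
      ∀ r : List V, hopCount neg s (q ++ r) = hopCount neg s q + hopCount neg u r := by
  induction q with
  | nil =>
    intro s u hq r
    simp only [IsWalk] at hq; subst hq; simp [hopCount]
  | cons a q ih =>
    intro s u hq r
    rw [List.cons_append]
    show (if neg s a then 1 else 0) + hopCount neg a (q ++ r)
        = ((if neg s a then 1 else 0) + hopCount neg a q) + hopCount neg u r
    rw [ih hq.2 r]; omega

/-- Split a walk at its last designated (negative) edge. -/
lemma split_last_neg {E : V → V → Prop} (neg : V → V → Prop) :
    ∀ {p : List V} {s v : V} {n : ℕ}, IsWalk E s v p → hopCount neg s p = n + 1 →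
      ∃ q u w r, p = q ++ w :: r ∧ IsWalk E s u q ∧ E u w ∧ neg u w ∧ IsWalk E w v r ∧
        hopCount neg s q = n ∧ hopCount neg w r = 0 := by
  intro p
  induction p with
  | nil => intro s v n _ hc; simp [hopCount] at hc
  | cons a p ih =>
    intro s v n hw hc
    simp only [hopCount] at hc
    rcases Nat.eq_zero_or_pos (hopCount neg a p) with h0 | hpos
    · rw [h0] at hc
      have hneg : neg s a := by by_contra hn; simp [hn] at hc
      have hn0 : n = 0 := by simp [hneg] at hc; omega
      exact ⟨[], s, a, p, by simp, rfl, hw.1, hneg, hw.2, by simp [hopCount, hn0], h0⟩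
    · obtain ⟨m, hm⟩ : ∃ m, hopCount neg a p = m + 1 :=
        ⟨hopCount neg a p - 1, by omega⟩
      rw [hm] at hc
      obtain ⟨q, u, w, r, hpe, hqw, hEuw, hnuw, hrw, hqc, hrc⟩ := ih hw.2 hm
      refine ⟨a :: q, u, w, r, by simp [hpe], ⟨hw.1, hqw⟩, hEuw, hnuw, hrw, ?_, hrc⟩
      simp only [hopCount, hqc]; omega

lemma walkDist_le_hopDist (E : V → V → Prop) (ℓ : V → V → ℝ) (neg : V → V → Prop)
    (h : ℕ) (s t : V) : walkDist E ℓ s t ≤ hopDist E ℓ neg h s t :=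
  biInf_mono fun _ hp => hp.1

lemma ereal_le_of_forall_pos {a : EReal} {r : ℝ}
    (h : ∀ ε : ℝ, 0 < ε → a ≤ ((r + ε : ℝ) : EReal)) : a ≤ (r : EReal) := by
  by_contra hlt
  push_neg at hlt
  obtain ⟨x, hrx, hxa⟩ := EReal.lt_iff_exists_real_btwn.mp hlt
  have := h (x - r) (by exact_mod_cast sub_pos.mpr (by exact_mod_cast hrx))
  rw [add_sub_cancel] at this
  exact absurd (lt_of_lt_of_le hxa this) (lt_irrefl _)

/-- If `d^{h+1}(s,v) = d^h(s,v)` for every negative vertex `v` (tail of a negative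
edge), then `d(s,v) = d^{h+1}(s,v)` for every vertex `v` (assuming `d(s,v) > -∞`). -/
theorem hopDist_stable_gives_dist
    {V : Type*} (E : V → V → Prop) (ℓ : V → V → ℝ) (h : ℕ) (s : V)
    (hfin : ∀ v : V, walkDist E ℓ s v ≠ ⊥)
    (hstable : ∀ v : V, (∃ w, E v w ∧ ℓ v w < 0) →
      hopDist E ℓ (fun u v => ℓ u v < 0) (h + 1) s v =
        hopDist E ℓ (fun u v => ℓ u v < 0) h s v) :
    ∀ v : V, walkDist E ℓ s v = hopDist E ℓ (fun u v => ℓ u v < 0) (h + 1) s v := by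
  set neg : V → V → Prop := fun u v => ℓ u v < 0 with hnegdef
  -- key lemma: every walk has length at least hopDist (h+1)
  have key : ∀ n (p : List V) (v : V), IsWalk E s v p → hopCount neg s p ≤ n →
      hopDist E ℓ neg (h + 1) s v ≤ (walkLen ℓ s p : EReal) := by
    intro n
    induction n with
    | zero =>
      intro p v hw hc
      exact iInf₂_le p ⟨hw, by omega⟩
    | succ n ih =>
      intro p v hw hc
      by_cases hch : hopCount neg s p ≤ h + 1
      · exact iInf₂_le p ⟨hw, hch⟩
      by_cases hcn : hopCount neg s p ≤ n
      · exact ih p v hw hcn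
      have hceq : hopCount neg s p = n + 1 := by omega
      obtain ⟨q, u, w, r, hpe, hqw, hEuw, hnuw, hrw, hqc, hrc⟩ :=
        split_last_neg neg hw hceq
      have hq : hopDist E ℓ neg (h + 1) s u ≤ (walkLen ℓ s q : EReal) :=
        ih q u hqw (le_of_eq hqc)
      have heq := hstable u ⟨w, hEuw, hnuw⟩
      rw [heq] at hq
      have hnb : hopDist E ℓ neg h s u ≠ ⊥ := fun hb =>
        hfin u (le_bot_iff.mp (hb ▸ walkDist_le_hopDist E ℓ neg h s u))
      have hnt : hopDist E ℓ neg h s u ≠ ⊤ :=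
        fun ht => absurd (ht ▸ hq) (by simp)
      set x₀ : ℝ := (hopDist E ℓ neg h s u).toReal with hx₀
      have hx : (x₀ : EReal) = hopDist E ℓ neg h s u := EReal.coe_toReal hnt hnb
      have hx_le : x₀ ≤ walkLen ℓ s q := by
        rw [← hx] at hq; exact_mod_cast hq
      have hplen : walkLen ℓ s p = walkLen ℓ s q + (ℓ u w + walkLen ℓ w r) := by
        rw [hpe, walkLen_append ℓ hqw]; simp [walkLen]
      rw [hplen]
      apply ereal_le_of_forall_pos
      intro ε hε
      -- find a walk q' to u with ≤ h hops and length < x₀ + ε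
      have hlt : hopDist E ℓ neg h s u < ((x₀ + ε : ℝ) : EReal) := by
        rw [← hx]; exact_mod_cast lt_add_of_pos_right x₀ hε
      rw [hopDist, iInf_lt_iff] at hlt
      obtain ⟨q', hq'⟩ := hlt
      rw [iInf_lt_iff] at hq'
      obtain ⟨hq'mem, hq'len⟩ := hq'
      have hq'len' : walkLen ℓ s q' < x₀ + ε := by exact_mod_cast hq'len
      have hwalk' : IsWalk E s v (q' ++ w :: r) :=
        isWalk_append _ hq'mem.1 ⟨hEuw, hrw⟩
      have hhop' : hopCount neg s (q' ++ w :: r) ≤ h + 1 := by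
        rw [hopCount_append neg hq'mem.1]
        have := hq'mem.2
        simp only [hopCount, if_pos hnuw, hrc]
        omega
      have hle := iInf₂_le (f := fun (p : List V) (_ : p ∈ {p : List V |
          IsWalk E s v p ∧ hopCount neg s p ≤ h + 1}) => (walkLen ℓ s p : EReal))
        (q' ++ w :: r) ⟨hwalk', hhop'⟩
      refine le_trans hle ?_
      rw [walkLen_append ℓ hq'mem.1]
      apply EReal.coe_le_coe_iff.mpr
      simp only [walkLen]
      nlinarith [hq'len', hx_le]
  intro v
  apply le_antisymm
  · exact walkDist_le_hopDist E ℓ neg (h + 1) s v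
  · exact le_iInf₂ fun p hp => key (hopCount neg s p) p v hp le_rfl
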